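/- Adapted basis of Lemma 7.1: for every p ≥ 1, every m ≥ 1, and every basis ω_1, …, ω_q of V^p_{m−1}, the family ∂₀ω_1, …, ∂₀ω_q is linearly independent in V^p_m and extends to a basis of V^p_m; i.e., there exists a basis of V^p_m whose first q elements are ∂₀ω_1, …, ∂₀ω_q. -/

import Mathlib

open MvPolynomial

/-- The time derivative `∂₀` on the ghost polynomial algebra: the unique
`k`-derivation with `∂₀ X(A, l) = X(A, l + 1)`. -/
noncomputable def timeDeriv (k : Type) [CommRing k] (N : ℕ) :
    Derivation k (MvPolynomial (Fin N × ℕ) k) (MvPolynomial (Fin N × ℕ) k) :=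
  mkDerivation k (fun p : Fin N × ℕ => X (p.1, p.2 + 1))

/-- `V^p_m`: the subspace of polynomials in the ghost variables `η^{A(l)}` that are
homogeneous of degree `p` in the variables and carry exactly `m` time derivatives
(weighted-homogeneous of weight `m` for the weight `w(A, l) = l`). -/
noncomputable def Vpm (k : Type) [Field k] (N p m : ℕ) :
    Submodule k (MvPolynomial (Fin N × ℕ) k) :=
  homogeneousSubmodule (Fin N × ℕ) k p ⊓
    weightedHomogeneousSubmodule k (fun x : Fin N × ℕ => x.2) m

/-!
The key identity is `⁅∂/∂X(A, l+1), ∂₀⁆ = ∂/∂X(A, l)`. Hence if `∂₀ f = 0` and `f` does not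
involve `X(A, l+1)`, then `∂f/∂X(A, l) = 0`, so in characteristic zero `f` does not involve
`X(A, l)` either. Applied to a variable of `f` with the largest number of derivatives, this shows
that the kernel of `∂₀` consists of constants, which meet `V^p_m` only in `0` when `p ≥ 1`. So
`∂₀` is injective on `V^p_m`, maps it into the finite-dimensional space `V^p_{m+1}`, and the
images of an independent family extend to a basis there.
-/

namespace MvPolynomial

variable {R σ M : Type*}

theorem IsWeightedHomogeneous.mkDerivation [CommSemiring R] [AddCommMonoid M] {w : σ → M}
    {c n : M} {f : σ → MvPolynomial σ R} (hf : ∀ i, (f i).IsWeightedHomogeneous w (w i + c))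
    {φ : MvPolynomial σ R} (hφ : φ.IsWeightedHomogeneous w n) :
    (mkDerivation R f φ).IsWeightedHomogeneous w (n + c) := by
  classical
  rw [← mem_weightedHomogeneousSubmodule, φ.as_sum, map_sum]
  refine Submodule.sum_mem _ fun s hs => ?_
  rw [mkDerivation_monomial]
  refine Submodule.smul_mem _ _ (Submodule.sum_mem _ fun i hi => ?_)
  have hmul := (isWeightedHomogeneous_monomial (R := R) w (s - Finsupp.single i 1) (s i : R)
    rfl).mul (hf i)
  rwa [← add_assoc, Finsupp.weight_sub_single_add (Finsupp.mem_support_iff.mp hi),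
    hφ (mem_support_iff.mp hs)] at hmul

theorem notMem_vars_of_pderiv_eq_zero [CommSemiring R] [NoZeroDivisors R] [CharZero R] {i : σ}
    {f : MvPolynomial σ R} (h : pderiv i f = 0) : i ∉ f.vars := by
  intro hi
  obtain ⟨s, hs, hsi⟩ := (mem_vars_iff_mem_support i).mp hi
  have hcoeff := congrArg (coeff (s - Finsupp.single i 1)) h
  rw [coeff_pderiv, coeff_zero,
    Finsupp.sub_add_single_one_cancel (Finsupp.mem_support_iff.mp hsi)] at hcoeff
  exact mul_ne_zero (mem_support_iff.mp hs) (Nat.cast_add_one_ne_zero _) hcoeff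

end MvPolynomial

theorem Finsupp.finite_setOf_degree_le_weight_le {σ : Type*} (w : σ → ℕ) {m : ℕ}
    (hw : {x | w x ≤ m}.Finite) (p : ℕ) :
    {d : σ →₀ ℕ | d.degree ≤ p ∧ d.weight w ≤ m}.Finite := by
  classical
  refine (Finset.Iic (Finsupp.indicator hw.toFinset fun _ _ => p)).finite_toSet.subset ?_
  rintro d ⟨hdeg, hwt⟩
  rw [Finset.mem_coe, Finset.mem_Iic]
  intro x
  by_cases hx : d x = 0
  · simp [hx]
  · rw [Finsupp.indicator_apply,
      dif_pos (hw.mem_toFinset.mpr ((Finsupp.le_weight_of_ne_zero' w hx).trans hwt))]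
    exact (Finsupp.le_degree x d).trans hdeg

theorem LinearIndependent.exists_linearIndependent_fin_append_span_eq_top {K V : Type*}
    [DivisionRing K] [AddCommGroup V] [Module K V] [FiniteDimensional K V] {q : ℕ} {v : Fin q → V}
    (hv : LinearIndependent K v) :
    ∃ (r : ℕ) (c : Fin r → V), LinearIndependent K (Fin.append v c) ∧
      Submodule.span K (Set.range (Fin.append v c)) = ⊤ := by
  obtain ⟨C, hC⟩ := Submodule.exists_isCompl (Submodule.span K (Set.range v))
  let b := Module.finBasis K C
  have hspan_b : Submodule.span K (Set.range (C.subtype ∘ b)) = C := by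
    rw [Set.range_comp, Submodule.span_image, b.span_eq, Submodule.map_subtype_top]
  have hsplit :
      Fin.append v (C.subtype ∘ b) ∘ finSumFinEquiv = Sum.elim v (C.subtype ∘ b) := by
    ext (i | j) <;> simp
  refine ⟨_, C.subtype ∘ b, ?_, ?_⟩
  · rw [← linearIndependent_equiv finSumFinEquiv, hsplit]
    refine hv.sum_type (b.linearIndependent.map' C.subtype C.ker_subtype) ?_
    rw [hspan_b]
    exact hC.disjoint
  · rw [← finSumFinEquiv.surjective.range_comp, hsplit, Set.Sum.elim_range,
      Submodule.span_union, hspan_b]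
    exact hC.sup_eq_top

theorem Submodule.exists_fin_extension_of_linearIndependent {K V : Type*} [DivisionRing K]
    [AddCommGroup V] [Module K V] {W : Submodule K V} [FiniteDimensional K W] {q : ℕ}
    {v : Fin q → V} (hv : LinearIndependent K v) (hvW : ∀ i, v i ∈ W) :
    ∃ (Q : ℕ) (hQ : q ≤ Q) (e : Fin Q → V), (∀ j, e j ∈ W) ∧ LinearIndependent K e ∧
      Submodule.span K (Set.range e) = W ∧ ∀ i, e (Fin.castLE hQ i) = v i := by
  let v' : Fin q → W := fun i => ⟨v i, hvW i⟩
  obtain ⟨r, c, hind, hspan⟩ :=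
    (hv.of_comp (v := v') W.subtype).exists_linearIndependent_fin_append_span_eq_top
  refine ⟨q + r, q.le_add_right r, W.subtype ∘ Fin.append v' c, fun j => (Fin.append v' c j).2,
    hind.map' W.subtype W.ker_subtype, ?_, fun i => ?_⟩
  · rw [Set.range_comp, Submodule.span_image, hspan, Submodule.map_subtype_top]
  · exact congrArg W.subtype (Fin.append_left v' c i)

section TimeDerivative

variable {k : Type} {N : ℕ}

theorem commutator_pderiv_timeDeriv [CommRing k] (i : Fin N × ℕ) :
    ⁅pderiv (R := k) (i.1, i.2 + 1), timeDeriv k N⁆ = pderiv i := by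
  classical
  refine derivation_ext fun j => ?_
  rw [Derivation.commutator_apply]
  simp only [timeDeriv, mkDerivation_X, pderiv_X, Pi.single_apply, Prod.ext_iff]
  split_ifs <;> simp_all

theorem eq_C_of_timeDeriv_eq_zero [CommRing k] [NoZeroDivisors k] [CharZero k]
    {f : MvPolynomial (Fin N × ℕ) k} (hf : timeDeriv k N f = 0) : f = C (f.coeff 0) := by
  have notMem_of_succ_notMem : ∀ i : Fin N × ℕ, (i.1, i.2 + 1) ∉ f.vars → i ∉ f.vars :=
    fun i hi =>
      notMem_vars_of_pderiv_eq_zero <| by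
        rw [← commutator_pderiv_timeDeriv, Derivation.commutator_apply, hf, map_zero,
          pderiv_eq_zero_of_notMem_vars hi, map_zero, sub_zero]
  refine vars_eq_empty_iff_eq_C.mp (Finset.eq_empty_of_forall_notMem fun i hi => ?_)
  obtain ⟨j, hj, hmax⟩ := f.vars.exists_max_image Prod.snd ⟨i, hi⟩
  exact notMem_of_succ_notMem j (fun h => by have := hmax _ h; omega) hj

theorem MvPolynomial.IsHomogeneous.eq_zero_of_timeDeriv_eq_zero [CommRing k] [NoZeroDivisors k]
    [CharZero k] {f : MvPolynomial (Fin N × ℕ) k} {p : ℕ} (hf : f.IsHomogeneous p) (hp : p ≠ 0)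
    (h : timeDeriv k N f = 0) : f = 0 := by
  have hC := eq_C_of_timeDeriv_eq_zero h
  by_contra hne
  rw [hC] at hf hne
  exact hp (hf.inj_right (isHomogeneous_C _ _) hne)

variable [Field k]

theorem timeDeriv_mem_Vpm {p m : ℕ} {f : MvPolynomial (Fin N × ℕ) k} (hf : f ∈ Vpm k N p m) :
    timeDeriv k N f ∈ Vpm k N p (m + 1) := by
  obtain ⟨hdeg, hwt⟩ := Submodule.mem_inf.mp hf
  refine Submodule.mem_inf.mpr ⟨?_, ?_⟩
  · exact hdeg.mkDerivation (c := 0) fun i => isWeightedHomogeneous_X k _ _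
  · exact hwt.mkDerivation (c := 1) fun i => isWeightedHomogeneous_X k _ _

instance Vpm.finiteDimensional (p m : ℕ) : FiniteDimensional k (Vpm k N p m) := by
  let S := {d : Fin N × ℕ →₀ ℕ | d.degree ≤ p ∧ d.weight (fun x => x.2) ≤ m}
  have : Finite S := (Finsupp.finite_setOf_degree_le_weight_le _
    ((Set.finite_univ.prod (Set.finite_Iic m)).subset fun x hx => ⟨trivial, hx⟩) p).to_subtype
  have : FiniteDimensional k (restrictSupport k S) :=
    Module.Finite.of_basis (basisRestrictSupport k S)
  refine Submodule.finiteDimensional_of_le (S₂ := restrictSupport k S) fun f hf d hd => ?_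
  obtain ⟨hdeg, hwt⟩ := Submodule.mem_inf.mp hf
  have hd' := mem_support_iff.mp hd
  refine ⟨?_, (hwt hd').le⟩
  rw [Finsupp.degree_eq_weight_one]
  exact (hdeg hd').le

end TimeDerivative

theorem timeDeriv_basis_extends_general
    (k : Type) [Field k] [CharZero k] (N : ℕ) (p : ℕ) (hp : 1 ≤ p)
    (m : ℕ) (q : ℕ) (ω : Fin q → MvPolynomial (Fin N × ℕ) k)
    (hmem : ∀ i, ω i ∈ Vpm k N p m)
    (hind : LinearIndependent k ω) :
    LinearIndependent k (fun i => timeDeriv k N (ω i)) ∧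
    ∃ (Q : ℕ) (hQ : q ≤ Q) (ω' : Fin Q → MvPolynomial (Fin N × ℕ) k),
      (∀ j, ω' j ∈ Vpm k N p (m + 1)) ∧
      LinearIndependent k ω' ∧
      Submodule.span k (Set.range ω') = Vpm k N p (m + 1) ∧
      ∀ i : Fin q, ω' (Fin.castLE hQ i) = timeDeriv k N (ω i) := by
  have hspan_le : Submodule.span k (Set.range ω) ≤ Vpm k N p m :=
    Submodule.span_le.mpr (Set.range_subset_iff.mpr hmem)
  have hdisj : Disjoint (Submodule.span k (Set.range ω))
      (LinearMap.ker (timeDeriv k N).toLinearMap) :=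
    Submodule.disjoint_def.mpr fun f hf hker =>
      IsHomogeneous.eq_zero_of_timeDeriv_eq_zero (Submodule.mem_inf.mp (hspan_le hf)).1
        (by omega) hker
  have hindT : LinearIndependent k (fun i => timeDeriv k N (ω i)) := hind.map hdisj
  exact ⟨hindT, Submodule.exists_fin_extension_of_linearIndependent hindT
    fun i => timeDeriv_mem_Vpm (hmem i)⟩

/-- Adapted basis (Lemma 7.1): for `p ≥ 1` and `m ≥ 1` (written `m + 1`), the image
under `∂₀` of any basis `ω_1, …, ω_q` of `V^p_m` is linearly independent and can be
completed to a basis of `V^p_{m+1}` whose first `q` elements are the `∂₀ ω_i`. -/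
theorem timeDeriv_basis_extends
    (k : Type) [Field k] [CharZero k] (N : ℕ) (hN : 1 ≤ N) (p : ℕ) (hp : 1 ≤ p)
    (m : ℕ) (q : ℕ) (ω : Fin q → MvPolynomial (Fin N × ℕ) k)
    (hmem : ∀ i, ω i ∈ Vpm k N p m)
    (hind : LinearIndependent k ω)
    (hspan : Submodule.span k (Set.range ω) = Vpm k N p m) :
    LinearIndependent k (fun i => timeDeriv k N (ω i)) ∧
    ∃ (Q : ℕ) (hQ : q ≤ Q) (ω' : Fin Q → MvPolynomial (Fin N × ℕ) k),
      (∀ j, ω' j ∈ Vpm k N p (m + 1)) ∧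
      LinearIndependent k ω' ∧
      Submodule.span k (Set.range ω') = Vpm k N p (m + 1) ∧
      ∀ i : Fin q, ω' (Fin.castLE hQ i) = timeDeriv k N (ω i) :=
  timeDeriv_basis_extends_general k N p hp m q ω hmem hind
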